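/- The vector -v_D belongs to rec(cl dom f) ∩ rec(cl dom g), i.e., -v_D lies in the recession cone of cl(dom f) and in the recession cone of cl(dom g). -/

import Mathlib

/-! Since `v_D` is the minimum-norm point of the closed convex set `cl(dom f* + dom g*)`,
`⟪v_D, ·⟫ ≥ 0` on it, so `⟪v_D, ·⟫` is bounded below on `dom f*` and on `dom g*`. If `-v_D`
were not a recession direction of `cl dom f`, separating `y - v_D` from `cl dom f` for some
`y ∈ cl dom f` would give `a` with `⟪v_D, a⟫ > 0` and `⟪·, a⟫` bounded below on `dom f`; then
`dom f*` contains a ray `w - t • a`, along which `⟪v_D, ·⟫ → -∞`. -/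

open scoped InnerProductSpace Pointwise Classical
open Filter Topology

noncomputable section

variable {H : Type*} [NormedAddCommGroup H] [InnerProductSpace ℝ H]

/-- The effective domain of an extended-real-valued function. -/
def fdom {α : Type*} (f : α → EReal) : Set α := {x | f x ≠ ⊤}

/-- The Fenchel conjugate `f*(u) = sup_x (⟪x, u⟫ - f x)`. -/
def fconj (f : H → EReal) : H → EReal :=
  fun u => ⨆ x : H, ((⟪x, u⟫_ℝ : ℝ) : EReal) - f x

/-- The recession function `(rec f)(y) = sup_{x ∈ dom f} (f (x + y) - f x)`. -/
def recFn (f : H → EReal) : H → EReal :=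
  fun y => ⨆ x ∈ fdom f, (f (x + y) - f x)

/-- A proper function: never `-∞` and not identically `+∞`. -/
def ProperFn {α : Type*} (f : α → EReal) : Prop := (∀ x, f x ≠ ⊥) ∧ ∃ x, f x ≠ ⊤

/-- Convexity of an extended-real-valued function, via convexity of its epigraph. -/
def ConvexFn (f : H → EReal) : Prop :=
  Convex ℝ {p : H × ℝ | f p.1 ≤ (p.2 : EReal)}

/-- `v` is the element of minimum norm of `S`, i.e. `v = P_S 0`, the metric
projection of `0` onto `S`. -/
def IsMinNormPoint (S : Set H) (v : H) : Prop := v ∈ S ∧ ∀ w ∈ S, ‖v‖ ≤ ‖w‖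

/-- `p` is the metric projection of `x` onto `S`, i.e. `p = P_S x`. -/
def IsProjOn (S : Set H) (x p : H) : Prop := p ∈ S ∧ ∀ w ∈ S, dist x p ≤ dist x w

/-- The polar cone `S° = {u | ∀ x ∈ S, ⟪x, u⟫ ≤ 0}`. -/
def polarCone (s : Set H) : Set H := {u | ∀ x ∈ s, ⟪x, u⟫_ℝ ≤ 0}

/-- The recession cone `rec S = {x | ∀ y ∈ S, x + y ∈ S}`. -/
def recCone (s : Set H) : Set H := {x | ∀ y ∈ s, x + y ∈ s}

/-- `p = prox_f w`: `p` minimizes `y ↦ f y + ½‖y - w‖²`. -/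
def IsProxOf (f : H → EReal) (w p : H) : Prop :=
  ∀ y : H, f p + ((1 / 2 * ‖p - w‖ ^ 2 : ℝ) : EReal) ≤ f y + ((1 / 2 * ‖y - w‖ ^ 2 : ℝ) : EReal)

lemma ProperFn.fconj_ne_bot {f : H → EReal} (hf : ProperFn f) (u : H) : fconj f u ≠ ⊥ := by
  obtain ⟨x, hx⟩ := hf.2
  refine ne_bot_of_le_ne_bot (EReal.coe_ne_bot (⟪x, u⟫_ℝ - (f x).toReal)) ?_
  rw [EReal.coe_sub, EReal.coe_toReal hx (hf.1 x)]
  exact le_iSup (fun x : H => ((⟪x, u⟫_ℝ : ℝ) : EReal) - f x) x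

lemma fconj_le_coe_of_forall {f : H → EReal} (hf : ProperFn f) {u : H} {c : ℝ}
    (h : ∀ x ∈ fdom f, ⟪x, u⟫_ℝ - (f x).toReal ≤ c) : fconj f u ≤ c := by
  refine iSup_le fun x => ?_
  by_cases hx : f x = ⊤
  · simp [hx]
  · rw [← EReal.coe_toReal hx (hf.1 x), ← EReal.coe_sub]
    exact EReal.coe_le_coe_iff.mpr (h x hx)

lemma inner_sub_le_fconj_toReal {f : H → EReal} (hf : ProperFn f) {u : H}
    (hu : u ∈ fdom (fconj f)) {x : H} (hx : x ∈ fdom f) :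
    ⟪x, u⟫_ℝ - (f x).toReal ≤ (fconj f u).toReal := by
  have h : ((⟪x, u⟫_ℝ - (f x).toReal : ℝ) : EReal) ≤ fconj f u := by
    rw [EReal.coe_sub, EReal.coe_toReal hx (hf.1 x)]
    exact le_iSup (fun x : H => ((⟪x, u⟫_ℝ : ℝ) : EReal) - f x) x
  rw [← EReal.coe_toReal hu (hf.fconj_ne_bot u)] at h
  exact EReal.coe_le_coe_iff.mp h

lemma convex_fdom_fconj {f : H → EReal} (hf : ProperFn f) : Convex ℝ (fdom (fconj f)) := by
  intro u hu v hv a b ha hb hab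
  refine ne_top_of_le_ne_top (EReal.coe_ne_top
    (a * (fconj f u).toReal + b * (fconj f v).toReal)) (fconj_le_coe_of_forall hf fun x hx => ?_)
  have hu' := mul_le_mul_of_nonneg_left (inner_sub_le_fconj_toReal hf hu hx) ha
  have hv' := mul_le_mul_of_nonneg_left (inner_sub_le_fconj_toReal hf hv hx) hb
  have hx' : (f x).toReal = a * (f x).toReal + b * (f x).toReal := by
    rw [← add_mul, hab, one_mul]
  rw [inner_add_right, real_inner_smul_right, real_inner_smul_right, hx']
  linarith

lemma add_smul_mem_fdom_fconj {f : H → EReal} (hf : ProperFn f) {a : H} {c : ℝ}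
    (hbdd : ∀ x ∈ fdom f, ⟪x, a⟫_ℝ ≤ c) {w : H} (hw : w ∈ fdom (fconj f)) {t : ℝ}
    (ht : 0 ≤ t) : w + t • a ∈ fdom (fconj f) := by
  refine ne_top_of_le_ne_top (EReal.coe_ne_top ((fconj f w).toReal + t * c))
    (fconj_le_coe_of_forall hf fun x hx => ?_)
  have hw' := inner_sub_le_fconj_toReal hf hw hx
  have hx' := mul_le_mul_of_nonneg_left (hbdd x hx) ht
  rw [inner_add_right, real_inner_smul_right]
  linarith

lemma ConvexFn.convex_fdom {f : H → EReal} (hf : ConvexFn f) : Convex ℝ (fdom f) := by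
  intro x hx y hy a b ha hb hab
  obtain ⟨r, hr, -⟩ := EReal.lt_iff_exists_real_btwn.mp (Ne.lt_top hx)
  obtain ⟨s, hs, -⟩ := EReal.lt_iff_exists_real_btwn.mp (Ne.lt_top hy)
  have hcomb := hf (x := (x, r)) (y := (y, s)) hr.le hs.le ha hb hab
  simp only [Prod.smul_mk, Prod.mk_add_mk, Set.mem_ofPred_eq, smul_eq_mul] at hcomb
  exact ne_top_of_le_ne_top (EReal.coe_ne_top _) hcomb

lemma IsMinNormPoint.inner_nonneg {S : Set H} (hS : Convex ℝ S) {v : H}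
    (hv : IsMinNormPoint S v) {w : H} (hw : w ∈ S) : 0 ≤ ⟪v, w⟫_ℝ := by
  have : Nonempty S := ⟨⟨v, hv.1⟩⟩
  have hinf : ‖(0 : H) - v‖ = ⨅ w : S, ‖(0 : H) - w‖ :=
    le_antisymm (le_ciInf fun w => by simpa using hv.2 w w.2)
      (ciInf_le ⟨0, by rintro r ⟨w, rfl⟩; exact norm_nonneg _⟩ (⟨v, hv.1⟩ : S))
  have h := (norm_eq_iInf_iff_real_inner_le_zero hS hv.1).mp hinf w hw
  simp only [zero_sub, inner_neg_left, inner_sub_right] at h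
  linarith [real_inner_self_nonneg (x := v)]

lemma exists_inner_lt_zero_of_notMem_recCone [CompleteSpace H] {C : Set H} (hC : Convex ℝ C)
    (hCc : IsClosed C) {d : H} (hd : d ∉ recCone C) :
    ∃ a : H, ∃ c : ℝ, ⟪d, a⟫_ℝ < 0 ∧ ∀ x ∈ C, c ≤ ⟪x, a⟫_ℝ := by
  simp only [recCone, Set.mem_ofPred_eq, not_forall] at hd
  obtain ⟨y, hy, hdy⟩ := hd
  obtain ⟨φ, c, hφdy, hφC⟩ := geometric_hahn_banach_point_closed hC hCc hdy
  set a := (InnerProductSpace.toDual ℝ H).symm φ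
  have hφ : ∀ z, φ z = ⟪z, a⟫_ℝ := fun z => by
    rw [real_inner_comm, InnerProductSpace.toDual_symm_apply]
  refine ⟨a, c, ?_, fun x hx => (hφ x ▸ hφC x hx).le⟩
  have hya := hφ y ▸ hφC y hy
  rw [hφ, inner_add_left] at hφdy
  linarith

lemma neg_mem_recCone_closure_fdom [CompleteSpace H] {f : H → EReal} (hf : ProperFn f)
    (hfc : ConvexFn f) {v : H} (hne : (fdom (fconj f)).Nonempty)
    (hbdd : BddBelow ((fun u => ⟪v, u⟫_ℝ) '' fdom (fconj f))) :
    -v ∈ recCone (closure (fdom f)) := by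
  by_contra hv
  obtain ⟨a, c, hva, hca⟩ :=
    exists_inner_lt_zero_of_notMem_recCone hfc.convex_fdom.closure isClosed_closure hv
  obtain ⟨m, hm⟩ := hbdd
  obtain ⟨w, hw⟩ := hne
  rw [inner_neg_left, neg_lt_zero] at hva
  have hbdd_neg : ∀ x ∈ fdom f, ⟪x, -a⟫_ℝ ≤ -c := fun x hx => by
    rw [inner_neg_right, neg_le_neg_iff]; exact hca x (subset_closure hx)
  set t := (⟪v, w⟫_ℝ - m + 1) / ⟪v, a⟫_ℝ
  have hmw : m ≤ ⟪v, w⟫_ℝ := hm ⟨w, hw, rfl⟩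
  have ht : t * ⟪v, a⟫_ℝ = ⟪v, w⟫_ℝ - m + 1 := div_mul_cancel₀ _ hva.ne'
  have hray := hm ⟨_, add_smul_mem_fdom_fconj hf hbdd_neg hw (by positivity : 0 ≤ t), rfl⟩
  simp only [inner_add_right, inner_smul_right, inner_neg_right] at hray
  linarith

theorem neg_vD_mem_recCones_general {H : Type*} [NormedAddCommGroup H] [InnerProductSpace ℝ H]
    [FiniteDimensional ℝ H]
    (f g : H → EReal)
    (hf_prop : ProperFn f) (hf_cvx : ConvexFn f)
    (hg_prop : ProperFn g) (hg_cvx : ConvexFn g)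
    (vD : H) (hvD : IsMinNormPoint (closure (fdom (fconj f) + fdom (fconj g))) vD)
    : -vD ∈ recCone (closure (fdom f)) ∩ recCone (closure (fdom g)) := by
  have : CompleteSpace H := FiniteDimensional.complete ℝ H
  have hconv := ((convex_fdom_fconj hf_prop).add (convex_fdom_fconj hg_prop)).closure
  have hnonneg : ∀ u ∈ fdom (fconj f), ∀ u' ∈ fdom (fconj g), 0 ≤ ⟪vD, u⟫_ℝ + ⟪vD, u'⟫_ℝ :=
    fun u hu u' hu' => by
      simpa only [inner_add_right] using
        hvD.inner_nonneg hconv (subset_closure (Set.add_mem_add hu hu'))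
  obtain ⟨-, u, hu, u', hu', -⟩ := closure_nonempty_iff.mp ⟨vD, hvD.1⟩
  refine ⟨neg_mem_recCone_closure_fdom hf_prop hf_cvx ⟨u, hu⟩ ⟨-⟪vD, u'⟫_ℝ, ?_⟩,
    neg_mem_recCone_closure_fdom hg_prop hg_cvx ⟨u', hu'⟩ ⟨-⟪vD, u⟫_ℝ, ?_⟩⟩
  · rintro _ ⟨w, hw, rfl⟩; linarith [hnonneg w hw u' hu']
  · rintro _ ⟨w, hw, rfl⟩; linarith [hnonneg u hu w hw]

theorem neg_vD_mem_recCones {H : Type*} [NormedAddCommGroup H] [InnerProductSpace ℝ H]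
    [FiniteDimensional ℝ H]
    (f g : H → EReal)
    (hf_prop : ProperFn f) (hf_lsc : LowerSemicontinuous f) (hf_cvx : ConvexFn f)
    (hg_prop : ProperFn g) (hg_lsc : LowerSemicontinuous g) (hg_cvx : ConvexFn g)
    (vD : H) (hvD : IsMinNormPoint (closure (fdom (fconj f) + fdom (fconj g))) vD)
    : -vD ∈ recCone (closure (fdom f)) ∩ recCone (closure (fdom g)) :=
  neg_vD_mem_recCones_general f g hf_prop hf_cvx hg_prop hg_cvx vD hvD

end
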